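/- arXiv:2501.14454 — 3 statements merged into one kernel-verified Lean document; each statement's English description precedes it below -/
import Mathlib

section
/- Let C₁, C₂ > 0 and K ≥ 0, and let A be the 6×6 real matrix A = [[C₂−C₁, −2K, 0, C₂, 0, C₂], [0, −C₁, 0, −K, 0, 0], [0, 0, −C₁, 0, −K, 0], [C₂, 0, 0, C₂−C₁, 0, C₂], [0, 0, 0, 0, −C₁, 0], [C₂, 0, 0, C₂, 0, C₂−C₁]]. Then the characteristic polynomial of A is p_A(λ) = (λ + C₁)³ ((λ + C₁)³ − 3C₂(λ + C₁)² − 2K²C₂). -/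
/-!
Writing `A = B - C₁ • 1`, the characteristic polynomial of `A` is that of `B` shifted by `C₁`
(`Matrix.charpoly_sub_scalar`), so it suffices to find `charpoly B = λ³ (λ³ - 3 C₂ λ² - 2 K² C₂)`,
a direct cofactor expansion since most entries of `B` vanish.
-/

open Polynomial Matrix

variable {R : Type*} [CommRing R]

/-- The gain and shear part `B` of the moment-evolution matrix, with `a = C₂` and `k = K`. -/
def gainShearMatrix (a k : R) : Matrix (Fin 6) (Fin 6) R :=
  !![a, -2 * k, 0, a, 0, a;
     0, 0, 0, -k, 0, 0;
     0, 0, 0, 0, -k, 0;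
     a, 0, 0, a, 0, a;
     0, 0, 0, 0, 0, 0;
     a, 0, 0, a, 0, a]

theorem gainShearMatrix_sub_scalar (a k c : R) :
    gainShearMatrix a k - scalar (Fin 6) c =
      !![a - c, -2*k, 0, a, 0, a;
          0, -c, 0, -k, 0, 0;
          0, 0, -c, 0, -k, 0;
          a, 0, 0, a - c, 0, a;
          0, 0, 0, 0, -c, 0;
          a, 0, 0, a, 0, a - c] := by
  ext i j
  fin_cases i <;> fin_cases j <;> simp [gainShearMatrix]

theorem charmatrix_gainShearMatrix (a k : R) :
    (gainShearMatrix a k).charmatrix =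
      !![X - C a, C (2 * k), 0, -C a, 0, -C a;
         0, X, 0, C k, 0, 0;
         0, 0, X, 0, C k, 0;
         -C a, 0, 0, X - C a, 0, -C a;
         0, 0, 0, 0, X, 0;
         -C a, 0, 0, -C a, 0, X - C a] := by
  ext i j
  fin_cases i <;> fin_cases j <;> simp [gainShearMatrix]

theorem charpoly_gainShearMatrix (a k : R) :
    (gainShearMatrix a k).charpoly =
      X ^ 3 * (X ^ 3 - C (3 * a) * X ^ 2 - C (2 * k ^ 2 * a)) := by
  rw [charpoly, charmatrix_gainShearMatrix]
  simp [det_succ_row_zero, Fin.sum_univ_succ, Fin.succAbove, map_ofNat]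
  ring

theorem stmt7_general (C₁ C₂ K : ℝ) :
    Matrix.charpoly
      (!![C₂ - C₁, -2*K, 0, C₂, 0, C₂;
          0, -C₁, 0, -K, 0, 0;
          0, 0, -C₁, 0, -K, 0;
          C₂, 0, 0, C₂ - C₁, 0, C₂;
          0, 0, 0, 0, -C₁, 0;
          C₂, 0, 0, C₂, 0, C₂ - C₁] : Matrix (Fin 6) (Fin 6) ℝ)
      = (X + C C₁) ^ 3 *
          ((X + C C₁) ^ 3 - C (3 * C₂) * (X + C C₁) ^ 2 - C (2 * K ^ 2 * C₂)) := by
  rw [← gainShearMatrix_sub_scalar, charpoly_sub_scalar, charpoly_gainShearMatrix]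
  simp only [mul_comp, sub_comp, pow_comp, X_comp, C_comp]

/-- Characteristic polynomial of the 6×6 moment-evolution matrix for simple shear. -/
theorem stmt7 (C₁ C₂ K : ℝ) (h1 : 0 < C₁) (h2 : 0 < C₂) (hK : 0 ≤ K) :
    Matrix.charpoly
      (!![C₂ - C₁, -2*K, 0, C₂, 0, C₂;
          0, -C₁, 0, -K, 0, 0;
          0, 0, -C₁, 0, -K, 0;
          C₂, 0, 0, C₂ - C₁, 0, C₂;
          0, 0, 0, 0, -C₁, 0;
          C₂, 0, 0, C₂, 0, C₂ - C₁] : Matrix (Fin 6) (Fin 6) ℝ)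
      = (X + C C₁) ^ 3 *
          ((X + C C₁) ^ 3 - C (3 * C₂) * (X + C C₁) ^ 2 - C (2 * K ^ 2 * C₂)) :=
  stmt7_general C₁ C₂ K
end

section
/- Let M denote the standard Gaussian density M(v) = (2π)^{-3/2} e^{-|v|²/2} on ℝ³ and let γ ∈ [0, 2]. There exist constants C₁, C₂ > 0 such that for all v ∈ ℝ³, C₁ (1 + |v|)^γ ≤ ∫_{ℝ³} |v − v*|^γ M(v*) dv* ≤ C₂ (1 + |v|)^γ. -/
/-!
For `γ ≥ 0` the triangle inequality gives `|v - w|^γ ≤ (1 + |v|)^γ (1 + |w|)^γ`, so the upper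
bound holds with `C₂` the `γ`-th moment of `(1 + |w|)` against `M`, which is finite because
`(1 + r)^2 ≤ 8 e^{r²/4}`. For the lower bound, place a unit ball at distance `2` from the origin
on the side opposite to `v`: on it `M` is bounded below and `|v - w| ≥ 1 + |v|`.
-/

open MeasureTheory Metric Real

section GeneralDensity

variable {E : Type*} [NormedAddCommGroup E]

theorem norm_sub_rpow_le_one_add_norm_rpow_mul {γ : ℝ} (hγ : 0 ≤ γ) (v w : E) :
    ‖v - w‖ ^ γ ≤ (1 + ‖v‖) ^ γ * (1 + ‖w‖) ^ γ := by
  have h : ‖v - w‖ ≤ (1 + ‖v‖) * (1 + ‖w‖) := by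
    nlinarith [norm_sub_le v w, norm_nonneg v, norm_nonneg w,
      mul_nonneg (norm_nonneg v) (norm_nonneg w)]
  calc ‖v - w‖ ^ γ ≤ ((1 + ‖v‖) * (1 + ‖w‖)) ^ γ := rpow_le_rpow (norm_nonneg _) h hγ
    _ = (1 + ‖v‖) ^ γ * (1 + ‖w‖) ^ γ := mul_rpow (by positivity) (by positivity)

variable [MeasurableSpace E] {μ : Measure E} {ρ : E → ℝ} {γ : ℝ}

theorem integral_norm_sub_rpow_mul_le (hγ : 0 ≤ γ) (hρ : ∀ w, 0 ≤ ρ w)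
    (hmom : Integrable (fun w => (1 + ‖w‖) ^ γ * ρ w) μ) (v : E) :
    ∫ w, ‖v - w‖ ^ γ * ρ w ∂μ ≤ (∫ w, (1 + ‖w‖) ^ γ * ρ w ∂μ) * (1 + ‖v‖) ^ γ := by
  rw [mul_comm, ← integral_const_mul]
  refine integral_mono_of_nonneg (.of_forall fun w => by have := hρ w; positivity)
    (hmom.const_mul _) (.of_forall fun w => ?_)
  simpa only [← mul_assoc] using mul_le_mul_of_nonneg_right
    (norm_sub_rpow_le_one_add_norm_rpow_mul hγ v w) (hρ w)

theorem integrable_norm_sub_rpow_mul [OpensMeasurableSpace E] (hγ : 0 ≤ γ) (hρ : ∀ w, 0 ≤ ρ w)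
    (hρm : AEStronglyMeasurable ρ μ) (hmom : Integrable (fun w => (1 + ‖w‖) ^ γ * ρ w) μ)
    (v : E) : Integrable (fun w => ‖v - w‖ ^ γ * ρ w) μ := by
  have hcont : Continuous fun w : E => ‖v - w‖ ^ γ :=
    (continuous_const.sub continuous_id).norm.rpow_const fun _ => Or.inr hγ
  refine (hmom.const_mul ((1 + ‖v‖) ^ γ)).mono' (hcont.aestronglyMeasurable.mul hρm)
    (.of_forall fun w => ?_)
  rw [Real.norm_of_nonneg (by have := hρ w; positivity), ← mul_assoc]
  exact mul_le_mul_of_nonneg_right (norm_sub_rpow_le_one_add_norm_rpow_mul hγ v w) (hρ w)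

end GeneralDensity

section LowerBound

variable {E : Type*} [NormedAddCommGroup E] [NormedSpace ℝ E] [Nontrivial E]

theorem exists_norm_eq_norm_sub_eq_add {r : ℝ} (hr : 0 ≤ r) (v : E) :
    ∃ x : E, ‖x‖ = r ∧ ‖v - x‖ = ‖v‖ + r := by
  rcases eq_or_ne v 0 with rfl | hv
  · obtain ⟨x, hx⟩ := exists_norm_eq E hr
    exact ⟨x, hx, by simp [hx]⟩
  · have hv' : 0 < ‖v‖ := norm_pos_iff.mpr hv
    refine ⟨-(r / ‖v‖) • v, ?_, ?_⟩
    · rw [norm_smul, norm_neg, Real.norm_of_nonneg (by positivity), div_mul_cancel₀ _ hv'.ne']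
    · rw [show v - -(r / ‖v‖) • v = (1 + r / ‖v‖) • v by module, norm_smul,
        Real.norm_of_nonneg (by positivity), add_mul, one_mul, div_mul_cancel₀ _ hv'.ne']

variable [FiniteDimensional ℝ E] [MeasurableSpace E] [BorelSpace E]
  {μ : Measure E} [μ.IsAddHaarMeasure] {ρ : E → ℝ} {γ m : ℝ}

theorem le_integral_norm_sub_rpow_mul (hγ : 0 ≤ γ) (hρ : ∀ w, 0 ≤ ρ w)
    (hm : ∀ w, ‖w‖ ≤ 3 → m ≤ ρ w) (v : E) (hint : Integrable (fun w => ‖v - w‖ ^ γ * ρ w) μ) :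
    m * μ.real (closedBall 0 1) * (1 + ‖v‖) ^ γ ≤ ∫ w, ‖v - w‖ ^ γ * ρ w ∂μ := by
  obtain ⟨x, hx, hvx⟩ := exists_norm_eq_norm_sub_eq_add (by norm_num : (0 : ℝ) ≤ 2) v
  have hball : ∀ w ∈ closedBall x 1, (1 + ‖v‖) ^ γ * m ≤ ‖v - w‖ ^ γ * ρ w := by
    intro w hw
    rw [mem_closedBall, dist_eq_norm] at hw
    have hw3 : ‖w‖ ≤ 3 := by linarith [norm_le_norm_add_norm_sub' w x]
    have hvw : 1 + ‖v‖ ≤ ‖v - w‖ := by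
      linarith [norm_sub_le_norm_sub_add_norm_sub v w x]
    calc (1 + ‖v‖) ^ γ * m ≤ (1 + ‖v‖) ^ γ * ρ w := by gcongr; exact hm w hw3
      _ ≤ ‖v - w‖ ^ γ * ρ w := by gcongr; exact hρ w
  have hnonneg : 0 ≤ᵐ[μ] fun w => ‖v - w‖ ^ γ * ρ w :=
    .of_forall fun w => by have := hρ w; positivity
  calc m * μ.real (closedBall 0 1) * (1 + ‖v‖) ^ γ
      = (1 + ‖v‖) ^ γ * m * μ.real (closedBall x 1) := by
        rw [Measure.real, Measure.real, Measure.addHaar_closedBall_center μ x]; ring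
    _ ≤ ∫ w in closedBall x 1, ‖v - w‖ ^ γ * ρ w ∂μ :=
        setIntegral_ge_of_const_le_real measurableSet_closedBall measure_closedBall_lt_top.ne
          hball hint.integrableOn
    _ ≤ ∫ w, ‖v - w‖ ^ γ * ρ w ∂μ := setIntegral_le_integral hint hnonneg

end LowerBound

section Gaussian

variable {V : Type*} [NormedAddCommGroup V] [InnerProductSpace ℝ V] [FiniteDimensional ℝ V]
  [MeasurableSpace V] [BorelSpace V]

theorem integrable_exp_neg_mul_sq_norm {b : ℝ} (hb : 0 < b) :
    Integrable (fun w : V => exp (-b * ‖w‖ ^ 2)) := by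
  have h := (GaussianFourier.integrable_cexp_neg_mul_sq_norm_add (V := V) (b := b)
    (by simpa using hb) 0 0).norm
  convert h using 2 with w
  rw [Complex.norm_exp]
  simp [← Complex.ofReal_pow]

theorem one_add_sq_le_mul_exp (r : ℝ) : (1 + r) ^ 2 ≤ 8 * exp (r ^ 2 / 4) := by
  nlinarith [add_one_le_exp (r ^ 2 / 4), sq_nonneg (r - 1)]

theorem integrable_one_add_norm_rpow_mul_exp_neg_sq_norm {γ : ℝ} (hγ0 : 0 ≤ γ) (hγ2 : γ ≤ 2) :
    Integrable (fun w : V => (1 + ‖w‖) ^ γ * exp (-‖w‖ ^ 2 / 2)) := by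
  refine ((integrable_exp_neg_mul_sq_norm (by norm_num : (0 : ℝ) < 1 / 4)).const_mul 8).mono'
    (by fun_prop) (.of_forall fun w => ?_)
  rw [Real.norm_of_nonneg (by positivity)]
  have hpow : (1 + ‖w‖) ^ γ ≤ (1 + ‖w‖) ^ 2 := by
    rw [← rpow_two]
    exact rpow_le_rpow_of_exponent_le (by linarith [norm_nonneg w]) hγ2
  calc (1 + ‖w‖) ^ γ * exp (-‖w‖ ^ 2 / 2)
      ≤ 8 * exp (‖w‖ ^ 2 / 4) * exp (-‖w‖ ^ 2 / 2) := by
        gcongr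
        exact hpow.trans (one_add_sq_le_mul_exp _)
    _ = 8 * exp (-(1 / 4) * ‖w‖ ^ 2) := by rw [mul_assoc, ← exp_add]; ring_nf

end Gaussian

noncomputable def maxwellian (w : EuclideanSpace ℝ (Fin 3)) : ℝ :=
  (2 * π) ^ (-(3 : ℝ) / 2) * exp (-‖w‖ ^ 2 / 2)

theorem maxwellian_nonneg (w : EuclideanSpace ℝ (Fin 3)) : 0 ≤ maxwellian w := by
  unfold maxwellian; positivity

theorem continuous_maxwellian : Continuous maxwellian := by
  unfold maxwellian; fun_prop

theorem integrable_one_add_norm_rpow_mul_maxwellian {γ : ℝ} (hγ0 : 0 ≤ γ) (hγ2 : γ ≤ 2) :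
    Integrable (fun w : EuclideanSpace ℝ (Fin 3) => (1 + ‖w‖) ^ γ * maxwellian w) := by
  simpa only [maxwellian, mul_left_comm] using
    (integrable_one_add_norm_rpow_mul_exp_neg_sq_norm (V := EuclideanSpace ℝ (Fin 3)) hγ0
      hγ2).const_mul ((2 * π) ^ (-(3 : ℝ) / 2))

theorem maxwellian_ge_of_norm_le {w : EuclideanSpace ℝ (Fin 3)} (hw : ‖w‖ ≤ 3) :
    (2 * π) ^ (-(3 : ℝ) / 2) * exp (-9 / 2) ≤ maxwellian w := by
  unfold maxwellian
  gcongr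
  nlinarith [norm_nonneg w]

/-- Two-sided bound for the scattering rate: for `γ ∈ [0,2]`, there are constants
`C₁, C₂ > 0` with `C₁(1+|v|)^γ ≤ ∫ |v−v*|^γ M(v*) dv* ≤ C₂(1+|v|)^γ`, `M` the
standard Maxwellian on `ℝ³`. -/
theorem stmt14 (γ : ℝ) (hγ : γ ∈ Set.Icc (0 : ℝ) 2) :
    ∃ C₁ : ℝ, 0 < C₁ ∧ ∃ C₂ : ℝ, 0 < C₂ ∧ ∀ v : EuclideanSpace ℝ (Fin 3),
      C₁ * (1 + ‖v‖) ^ γ ≤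
          (∫ w : EuclideanSpace ℝ (Fin 3),
            ‖v - w‖ ^ γ * ((2 * Real.pi) ^ (-(3 : ℝ) / 2) * Real.exp (-‖w‖ ^ 2 / 2))) ∧
      (∫ w : EuclideanSpace ℝ (Fin 3),
            ‖v - w‖ ^ γ * ((2 * Real.pi) ^ (-(3 : ℝ) / 2) * Real.exp (-‖w‖ ^ 2 / 2)))
        ≤ C₂ * (1 + ‖v‖) ^ γ := by
  obtain ⟨hγ0, hγ2⟩ := hγ
  have hmom := integrable_one_add_norm_rpow_mul_maxwellian hγ0 hγ2
  have lower v := le_integral_norm_sub_rpow_mul hγ0 maxwellian_nonneg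
    (fun _ => maxwellian_ge_of_norm_le) v
    (integrable_norm_sub_rpow_mul hγ0 maxwellian_nonneg continuous_maxwellian.aestronglyMeasurable
      hmom v)
  have upper v := integral_norm_sub_rpow_mul_le hγ0 maxwellian_nonneg hmom v
  have hC₁ : 0 < (2 * π) ^ (-(3 : ℝ) / 2) * exp (-9 / 2) *
      volume.real (closedBall (0 : EuclideanSpace ℝ (Fin 3)) 1) := by
    have hball : 0 < volume.real (closedBall (0 : EuclideanSpace ℝ (Fin 3)) 1) :=
      ENNReal.toReal_pos (measure_closedBall_pos volume 0 one_pos).ne' measure_closedBall_lt_top.ne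
    positivity
  -- `C₂ ≥ C₁`: evaluate both bounds at `v = 0`.
  refine ⟨_, hC₁, _, hC₁.trans_le (by simpa using (lower 0).trans (upper 0)),
    fun v => ⟨lower v, upper v⟩⟩
end

section
/- Let M(v*) = (2π)^{-3/2} e^{-|v*|²/2}, let γ ∈ (0,1), α > 1 + γ, and C > 0. Define F(v) = (1+|v|)^γ ∫_{ℝ³} ∫_{S²} M(v*) (1 + |v − ((v−v*)·ω)ω|)^{-α} dω dv*. Then F(v) → 0 as |v| → ∞. -/
/-!
The post-collisional velocity `v' = v - ⟪v - w, ω⟫ • ω` has the same component orthogonal to `ω`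
as `v`, so `‖v'‖ ≥ ‖v - ⟪v, ω⟫ • ω‖` whatever `w` is. This is at least `√‖v‖` unless `ω` lies
within distance `√(2 / ‖v‖)` of `±v / ‖v‖`, and each of these two caps has surface measure
`O(1 / ‖v‖)`, being the image of a planar disc under a Lipschitz graph map. Hence the sphere
integral is `O(1 / ‖v‖ + (1 + √‖v‖)^(-α))` uniformly in `w`, and this still tends to zero after
multiplication by `(1 + ‖v‖)^γ` because `γ < 1` and `2γ < α`.
-/
open MeasureTheory Filter Metric Module
open scoped RealInnerProductSpace ENNReal NNReal Topology

lemma abs_sub_le_abs_sub_of_sq_add_sq_eq {a b s t : ℝ} (ha : 0 ≤ a) (hb : 0 ≤ b)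
    (has : a ≤ s) (hbt : b ≤ t) (h : s ^ 2 + a ^ 2 = t ^ 2 + b ^ 2) : |s - t| ≤ |a - b| := by
  rw [← sq_le_sq]
  rcases (add_nonneg (ha.trans has) (hb.trans hbt)).eq_or_lt with h0 | hpos
  · nlinarith
  refine le_of_mul_le_mul_right ?_ (pow_pos hpos 2)
  calc (s - t) ^ 2 * (s + t) ^ 2 = ((a - b) * (a + b)) ^ 2 := by
        rw [← mul_pow, show (s - t) * (s + t) = -((a - b) * (a + b)) by linear_combination h,
          neg_sq]
    _ ≤ (a - b) ^ 2 * (s + t) ^ 2 := by rw [mul_pow]; gcongr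

section InnerProductSpace

variable {E : Type*} [NormedAddCommGroup E] [InnerProductSpace ℝ E]

lemma norm_sub_inner_smul_sq {ω : E} (hω : ‖ω‖ = 1) (v : E) :
    ‖v - ⟪v, ω⟫ • ω‖ ^ 2 = ‖v‖ ^ 2 - ⟪v, ω⟫ ^ 2 := by
  rw [norm_sub_sq_real, real_inner_smul_right, norm_smul, hω, Real.norm_eq_abs, mul_one, sq_abs]
  ring

lemma norm_sub_inner_smul_le_norm_sub_inner_sub_smul {ω : E} (hω : ‖ω‖ = 1) (v w : E) :
    ‖v - ⟪v, ω⟫ • ω‖ ≤ ‖v - ⟪v - w, ω⟫ • ω‖ := by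
  have hdecomp : v - ⟪v - w, ω⟫ • ω = (v - ⟪v, ω⟫ • ω) + ⟪w, ω⟫ • ω := by
    rw [inner_sub_left]; module
  have horth : ⟪v - ⟪v, ω⟫ • ω, ⟪w, ω⟫ • ω⟫ = 0 := by
    rw [real_inner_smul_right, inner_sub_left, real_inner_smul_left,
      real_inner_self_eq_norm_sq, hω]
    ring
  rw [hdecomp, ← sq_le_sq₀ (norm_nonneg _) (norm_nonneg _), norm_add_sq_real, horth]
  nlinarith

lemma norm_sub_sq_le_or_norm_add_sq_le {u ω : E} (hu : ‖u‖ = 1) (hω : ‖ω‖ = 1) {ε : ℝ}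
    (h : 1 - ε ≤ ⟪u, ω⟫ ^ 2) : ‖ω - u‖ ^ 2 ≤ 2 * ε ∨ ‖ω + u‖ ^ 2 ≤ 2 * ε := by
  have hle : |⟪u, ω⟫| ≤ 1 := by simpa [hu, hω] using abs_real_inner_le_norm u ω
  rw [norm_sub_sq_real, norm_add_sq_real, hu, hω, real_inner_comm]
  rcases le_total 0 ⟪u, ω⟫ with hpos | hneg
  · left; nlinarith [abs_of_nonneg hpos]
  · right; nlinarith [abs_of_nonpos hneg]

noncomputable def hemisphereLift (u p : E) : E := p + √(1 - ‖p‖ ^ 2) • u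

lemma norm_hemisphereLift_sub_sq_le {u p q : E} (hu : ‖u‖ = 1) (hp : ⟪p, u⟫ = 0)
    (hq : ⟪q, u⟫ = 0) (hp2 : ‖p‖ ^ 2 ≤ 1 / 2) (hq2 : ‖q‖ ^ 2 ≤ 1 / 2) :
    ‖hemisphereLift u p - hemisphereLift u q‖ ^ 2 ≤ 2 * ‖p - q‖ ^ 2 := by
  set s := √(1 - ‖p‖ ^ 2)
  set t := √(1 - ‖q‖ ^ 2)
  have hs : s ^ 2 = 1 - ‖p‖ ^ 2 := Real.sq_sqrt (by linarith)
  have ht : t ^ 2 = 1 - ‖q‖ ^ 2 := Real.sq_sqrt (by linarith)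
  have hps : ‖p‖ ≤ s := by
    rw [Real.le_sqrt (norm_nonneg _) (by linarith)]; linarith
  have hqt : ‖q‖ ≤ t := by
    rw [Real.le_sqrt (norm_nonneg _) (by linarith)]; linarith
  have hst : |s - t| ≤ |‖p‖ - ‖q‖| :=
    abs_sub_le_abs_sub_of_sq_add_sq_eq (norm_nonneg p) (norm_nonneg q) hps hqt (by linarith)
  have horth : ⟪p - q, (s - t) • u⟫ = 0 := by
    rw [real_inner_smul_right, inner_sub_left, hp, hq]; ring
  have hdiff : hemisphereLift u p - hemisphereLift u q = (p - q) + (s - t) • u := by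
    unfold hemisphereLift; module
  rw [hdiff, norm_add_sq_real, horth, norm_smul, hu, mul_one,
    Real.norm_eq_abs, sq_abs]
  have := sq_le_sq.mpr ((hst.trans (abs_norm_sub_norm_le p q)).trans_eq (abs_norm _).symm)
  linarith

lemma sphere_inter_closedBall_subset_image_hemisphereLift {u : E} (hu : ‖u‖ = 1) {ρ : ℝ}
    (hρ : ρ ≤ 1 / 2) :
    sphere 0 1 ∩ closedBall u ρ ⊆ hemisphereLift u '' ((ℝ ∙ u)ᗮ ∩ closedBall 0 ρ) := by
  rintro ω ⟨hω, hωu⟩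
  rw [mem_sphere_zero_iff_norm] at hω
  rw [mem_closedBall, dist_eq_norm] at hωu
  set t := ⟪ω, u⟫
  have hdist : ‖ω - u‖ ^ 2 = 2 - 2 * t := by rw [norm_sub_sq_real, hω, hu]; ring
  have ht1 : t ≤ 1 := (real_inner_le_norm ω u).trans (by rw [hu, hω, one_mul])
  have ht0 : 0 ≤ t := by nlinarith [norm_nonneg (ω - u)]
  have hp : ‖ω - t • u‖ ^ 2 = 1 - t ^ 2 := by rw [norm_sub_inner_smul_sq hu, hω, one_pow]
  refine ⟨ω - t • u, ⟨?_, ?_⟩, ?_⟩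
  · rw [SetLike.mem_coe, Submodule.mem_orthogonal_singleton_iff_inner_left, inner_sub_left,
      real_inner_smul_left, real_inner_self_eq_norm_sq, hu]
    ring
  · rw [mem_closedBall, dist_zero_right, ← sq_le_sq₀ (norm_nonneg _) ((norm_nonneg _).trans hωu)]
    nlinarith [pow_le_pow_left₀ (norm_nonneg _) hωu 2]
  · rw [hemisphereLift, hp, show 1 - (1 - t ^ 2) = t ^ 2 by ring, Real.sqrt_sq ht0,
      sub_add_cancel]

lemma exists_lipschitzOnWith_sphere_inter_closedBall_subset_image [FiniteDimensional ℝ E]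
    (hE : finrank ℝ E = 3) {u : E} (hu : ‖u‖ = 1) :
    ∃ f : EuclideanSpace ℝ (Fin 2) → E, LipschitzOnWith 2 f (closedBall 0 (1 / 2)) ∧
      ∀ ρ ≤ 1 / 2, sphere 0 1 ∩ closedBall u ρ ⊆ f '' closedBall 0 ρ := by
  have hW : finrank ℝ (ℝ ∙ u)ᗮ = 2 := by
    have := Submodule.finrank_add_finrank_orthogonal (𝕜 := ℝ) (ℝ ∙ u)
    rw [finrank_span_singleton (norm_ne_zero_iff.mp (hu.trans_ne one_ne_zero)), hE] at this
    omega
  let e : EuclideanSpace ℝ (Fin 2) ≃ₗᵢ[ℝ] (ℝ ∙ u)ᗮ :=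
    ((stdOrthonormalBasis ℝ _).reindex (finCongr hW)).repr.symm
  let L : EuclideanSpace ℝ (Fin 2) →ₗᵢ[ℝ] E := (ℝ ∙ u)ᗮ.subtypeₗᵢ.comp e.toLinearIsometry
  have hL : ∀ x, ⟪L x, u⟫ = 0 := fun x =>
    Submodule.mem_orthogonal_singleton_iff_inner_left.mp (e x).2
  have hLx : ∀ x ∈ closedBall (0 : EuclideanSpace ℝ (Fin 2)) (1 / 2), ‖L x‖ ^ 2 ≤ 1 / 2 := by
    intro x hx
    rw [mem_closedBall, dist_zero_right] at hx
    rw [L.norm_map]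
    nlinarith [norm_nonneg x]
  refine ⟨fun x => hemisphereLift u (L x), ?_, fun ρ hρ => ?_⟩
  · refine LipschitzOnWith.of_dist_le_mul fun x hx y hy => ?_
    rw [dist_eq_norm, dist_eq_norm, ← sq_le_sq₀ (norm_nonneg _) (by positivity)]
    have := norm_hemisphereLift_sub_sq_le hu (hL x) (hL y) (hLx x hx) (hLx y hy)
    rw [← map_sub, L.norm_map] at this
    push_cast
    nlinarith [sq_nonneg ‖x - y‖]
  · refine (sphere_inter_closedBall_subset_image_hemisphereLift hu hρ).trans ?_
    rintro _ ⟨p, ⟨hpu, hpρ⟩, rfl⟩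
    refine ⟨e.symm ⟨p, hpu⟩, ?_, by simp [L]⟩
    simpa [mem_closedBall, dist_zero_right, e.symm.norm_map] using hpρ

section FiniteDimensional

variable [FiniteDimensional ℝ E] [MeasurableSpace E] [BorelSpace E]

lemma exists_hausdorffMeasure_sphere_inter_closedBall_le (hE : finrank ℝ E = 3) :
    ∃ K : ℝ≥0, ∀ u : E, ‖u‖ = 1 → ∀ ρ, 0 ≤ ρ → ρ ≤ 1 / 2 →
      μH[2] (sphere (0 : E) 1 ∩ closedBall u ρ) ≤ ENNReal.ofReal (K * ρ ^ 2) := by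
  have : (μH[2] : Measure (EuclideanSpace ℝ (Fin 2))).IsAddHaarMeasure := by
    simpa using
      (inferInstance : (μH[(2 : ℕ)] : Measure (EuclideanSpace ℝ (Fin 2))).IsAddHaarMeasure)
  set c := μH[2] (closedBall (0 : EuclideanSpace ℝ (Fin 2)) 1)
  have hc : c ≠ ∞ := measure_closedBall_lt_top.ne
  refine ⟨4 * c.toNNReal, fun u hu ρ hρ0 hρ => ?_⟩
  obtain ⟨f, hlip, hsub⟩ := exists_lipschitzOnWith_sphere_inter_closedBall_subset_image hE hu
  calc μH[2] (sphere 0 1 ∩ closedBall u ρ) ≤ μH[2] (f '' closedBall 0 ρ) :=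
        measure_mono (hsub ρ hρ)
    _ ≤ (2 : ℝ≥0∞) ^ (2 : ℝ) * μH[2] (closedBall 0 ρ) :=
      (hlip.mono (closedBall_subset_closedBall hρ)).hausdorffMeasure_image_le (by norm_num)
    _ = ENNReal.ofReal ((4 * c.toNNReal : ℝ≥0) * ρ ^ 2) := by
      push_cast
      rw [Measure.addHaar_closedBall' _ _ hρ0, finrank_euclideanSpace_fin, ENNReal.rpow_two,
        ENNReal.ofReal_mul (by positivity), ENNReal.ofReal_mul (by norm_num),
        ENNReal.ofReal_toReal hc]
      norm_num
      ring

lemma hausdorffMeasure_sphere_lt_top (hE : finrank ℝ E = 3) : μH[2] (sphere (0 : E) 1) < ∞ := by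
  obtain ⟨K, hK⟩ := exists_hausdorffMeasure_sphere_inter_closedBall_le hE
  refine (isCompact_sphere 0 1).measure_lt_top_of_nhdsWithin fun u hu => ?_
  refine ⟨sphere 0 1 ∩ closedBall u (1 / 2),
    inter_mem_nhdsWithin _ (closedBall_mem_nhds _ (by norm_num)), ?_⟩
  exact (hK u (by simpa using hu) _ (by norm_num) le_rfl).trans_lt ENNReal.ofReal_lt_top

lemma exists_hausdorffMeasure_almost_parallel_le (hE : finrank ℝ E = 3) :
    ∃ K : ℝ≥0, ∀ v : E, 8 ≤ ‖v‖ →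
      μH[2] ({ω | ‖v - ⟪v, ω⟫ • ω‖ ≤ √‖v‖} ∩ sphere 0 1) ≤ ENNReal.ofReal (K / ‖v‖) := by
  obtain ⟨K, hK⟩ := exists_hausdorffMeasure_sphere_inter_closedBall_le hE
  refine ⟨4 * K, fun v hv => ?_⟩
  set r := ‖v‖
  have hr : 0 < r := by linarith
  set u := r⁻¹ • v
  have hu : ‖u‖ = 1 := by rw [norm_smul, norm_inv, norm_norm, inv_mul_cancel₀ hr.ne']
  set ρ := √(2 / r)
  have hρ2 : ρ ^ 2 = 2 / r := Real.sq_sqrt (by positivity)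
  have hρ : ρ ≤ 1 / 2 := by
    rw [Real.sqrt_le_left (by norm_num), div_le_iff₀ hr]; linarith
  have hsub : {ω | ‖v - ⟪v, ω⟫ • ω‖ ≤ √r} ∩ sphere 0 1 ⊆
      (sphere 0 1 ∩ closedBall u ρ) ∪ (sphere 0 1 ∩ closedBall (-u) ρ) := by
    rintro ω ⟨hωv, hω⟩
    have hω1 : ‖ω‖ = 1 := by simpa using hω
    have hperp : r ^ 2 - ⟪v, ω⟫ ^ 2 ≤ r := by
      rw [← norm_sub_inner_smul_sq hω1, ← Real.sq_sqrt hr.le]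
      exact pow_le_pow_left₀ (norm_nonneg _) hωv 2
    have huω : 1 - 1 / r ≤ ⟪u, ω⟫ ^ 2 := by
      have hlhs : (1 - 1 / r) * r ^ 2 = r ^ 2 - r := by field_simp
      rw [real_inner_smul_left, mul_pow, inv_pow, ← div_eq_inv_mul, le_div_iff₀ (by positivity),
        hlhs]
      linarith
    rcases norm_sub_sq_le_or_norm_add_sq_le hu hω1 huω with h | h <;> rw [mul_one_div] at h
    · refine Or.inl ⟨hω, ?_⟩
      rw [mem_closedBall, dist_eq_norm, Real.le_sqrt (norm_nonneg _) (by positivity)]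
      linarith
    · refine Or.inr ⟨hω, ?_⟩
      rw [mem_closedBall, dist_eq_norm, sub_neg_eq_add,
        Real.le_sqrt (norm_nonneg _) (by positivity)]
      linarith
  calc _ ≤ μH[2] (sphere 0 1 ∩ closedBall u ρ) + μH[2] (sphere 0 1 ∩ closedBall (-u) ρ) :=
        (measure_mono hsub).trans (measure_union_le _ _)
    _ ≤ ENNReal.ofReal (K * ρ ^ 2) + ENNReal.ofReal (K * ρ ^ 2) :=
        add_le_add (hK u hu ρ (Real.sqrt_nonneg _) hρ)
          (hK (-u) (by rwa [norm_neg]) ρ (Real.sqrt_nonneg _) hρ)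
    _ = ENNReal.ofReal ((4 * K : ℝ≥0) / r) := by
      rw [← ENNReal.ofReal_add (by positivity) (by positivity), hρ2]
      push_cast
      ring_nf

lemma exists_setIntegral_sphere_rpow_le (hE : finrank ℝ E = 3) {α : ℝ} (hα : 0 ≤ α) :
    ∃ K : ℝ≥0, ∀ v w : E, 8 ≤ ‖v‖ →
      ∫ ω in sphere 0 1, (1 + ‖v - ⟪v - w, ω⟫ • ω‖) ^ (-α) ∂μH[2]
        ≤ K / ‖v‖ + μH[2].real (sphere (0 : E) 1) * (1 + √‖v‖) ^ (-α) := by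
  obtain ⟨K, hK⟩ := exists_hausdorffMeasure_almost_parallel_le hE
  refine ⟨K, fun v w hv => ?_⟩
  have : IsFiniteMeasure (μH[2].restrict (sphere (0 : E) 1)) :=
    isFiniteMeasure_restrict.mpr (hausdorffMeasure_sphere_lt_top hE).ne
  set A := {ω : E | ‖v - ⟪v, ω⟫ • ω‖ ≤ √‖v‖}
  have hA : MeasurableSet A := (isClosed_le (by fun_prop) continuous_const).measurableSet
  set c := (1 + √‖v‖) ^ (-α)
  have hpt : ∀ ω ∈ sphere (0 : E) 1,
      (1 + ‖v - ⟪v - w, ω⟫ • ω‖) ^ (-α) ≤ A.indicator 1 ω + c := by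
    intro ω hω
    have hle := norm_sub_inner_smul_le_norm_sub_inner_sub_smul (by simpa using hω) v w
    by_cases hωA : ω ∈ A
    · rw [Set.indicator_of_mem hωA, Pi.one_apply]
      exact le_add_of_le_of_nonneg (Real.rpow_le_one_of_one_le_of_nonpos
        (le_add_of_nonneg_right (norm_nonneg _)) (neg_nonpos.mpr hα)) (by positivity)
    · rw [Set.indicator_of_notMem hωA, zero_add]
      simp only [A, Set.mem_ofPred_eq, not_le] at hωA
      exact Real.rpow_le_rpow_of_nonpos (by positivity) (by linarith) (neg_nonpos.mpr hα)
  have hind : Integrable (A.indicator (1 : E → ℝ)) (μH[2].restrict (sphere 0 1)) :=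
    (integrable_const 1).indicator hA
  calc _ ≤ ∫ ω in sphere 0 1, (A.indicator 1 ω + c) ∂μH[2] :=
        integral_mono_of_nonneg (ae_of_all _ fun ω => by positivity)
          (hind.add (integrable_const c))
          (ae_restrict_of_forall_mem isClosed_sphere.measurableSet hpt)
    _ = μH[2].real (A ∩ sphere 0 1) + μH[2].real (sphere (0 : E) 1) * c := by
        rw [integral_add hind (integrable_const c), integral_indicator_one hA, setIntegral_const,
          measureReal_restrict_apply hA, smul_eq_mul]
    _ ≤ K / ‖v‖ + μH[2].real (sphere (0 : E) 1) * c := by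
        gcongr
        exact ENNReal.toReal_le_of_le_ofReal (by positivity) (hK v hv)

end FiniteDimensional

end InnerProductSpace

lemma tendsto_one_add_rpow_div_atTop {γ : ℝ} (hγ : γ < 1) :
    Tendsto (fun r : ℝ => (1 + r) ^ γ / r) atTop (𝓝 0) := by
  have hlim : Tendsto (fun r : ℝ => (1 + r) ^ (γ - 1)) atTop (𝓝 0) := by
    simpa [neg_sub, Function.comp_def] using (tendsto_rpow_neg_atTop (sub_pos.mpr hγ)).comp
      (tendsto_atTop_add_const_left _ 1 tendsto_id)
  refine squeeze_zero' ?_ ?_ (by simpa using hlim.const_mul 2)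
  · filter_upwards [eventually_ge_atTop 0] with r hr
    positivity
  · filter_upwards [eventually_ge_atTop 1] with r hr
    have hpos : 0 < (1 + r) ^ γ := by positivity
    rw [Real.rpow_sub_one (by positivity), mul_div_assoc', div_le_div_iff₀ (by positivity)
      (by positivity)]
    nlinarith

lemma tendsto_one_add_rpow_mul_one_add_sqrt_rpow_neg_atTop {γ α : ℝ} (hγ : 0 ≤ γ)
    (hα : 2 * γ < α) :
    Tendsto (fun r : ℝ => (1 + r) ^ γ * (1 + √r) ^ (-α)) atTop (𝓝 0) := by
  have hlim : Tendsto (fun r : ℝ => (1 + √r) ^ (2 * γ - α)) atTop (𝓝 0) := by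
    simpa [neg_sub, Function.comp_def] using (tendsto_rpow_neg_atTop (sub_pos.mpr hα)).comp
      (tendsto_atTop_add_const_left _ 1 Real.tendsto_sqrt_atTop)
  refine squeeze_zero' ?_ ?_ hlim
  · filter_upwards [eventually_ge_atTop 0] with r hr
    positivity
  · filter_upwards [eventually_ge_atTop 0] with r hr
    have hsq : 1 + r ≤ (1 + √r) ^ (2 : ℝ) := by
      rw [Real.rpow_two]; nlinarith [Real.sq_sqrt hr, Real.sqrt_nonneg r]
    calc (1 + r) ^ γ * (1 + √r) ^ (-α) ≤ ((1 + √r) ^ (2 : ℝ)) ^ γ * (1 + √r) ^ (-α) := by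
          gcongr
      _ = (1 + √r) ^ (2 * γ - α) := by
          rw [← Real.rpow_mul (by positivity), ← Real.rpow_add (by positivity), sub_eq_add_neg]

lemma integrable_exp_neg_sq_norm_div_two :
    Integrable (fun w : EuclideanSpace ℝ (Fin 3) => Real.exp (-‖w‖ ^ 2 / 2)) := by
  refine Integrable.of_integral_ne_zero ?_
  have := GaussianFourier.integral_rexp_neg_mul_sq_norm (V := EuclideanSpace ℝ (Fin 3))
    (b := 1 / 2) (by norm_num)
  simp only [neg_mul, one_div, ← div_eq_inv_mul] at this
  simp only [neg_div, this]
  positivity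

theorem stmt15_general (γ α : ℝ) (hγ : γ ∈ Set.Ioo (0 : ℝ) 1) (hα : 1 + γ < α) :
    Filter.Tendsto
      (fun v : EuclideanSpace ℝ (Fin 3) =>
        (1 + ‖v‖) ^ γ *
          ∫ w : EuclideanSpace ℝ (Fin 3),
            ((2 * Real.pi) ^ (-(3 : ℝ) / 2) * Real.exp (-‖w‖ ^ 2 / 2)) *
              ∫ ω in Metric.sphere (0 : EuclideanSpace ℝ (Fin 3)) 1,
                (1 + ‖v - ⟪v - w, ω⟫ • ω‖) ^ (-α) ∂(μH[2]))
      (Filter.comap norm Filter.atTop) (nhds 0) := by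
  obtain ⟨K, hK⟩ := exists_setIntegral_sphere_rpow_le finrank_euclideanSpace_fin
    (by linarith [hγ.1] : 0 ≤ α)
  set M : EuclideanSpace ℝ (Fin 3) → ℝ := fun w =>
    (2 * Real.pi) ^ (-(3 : ℝ) / 2) * Real.exp (-‖w‖ ^ 2 / 2)
  have hM : Integrable M := integrable_exp_neg_sq_norm_div_two.const_mul _
  set σ := μH[2].real (sphere (0 : EuclideanSpace ℝ (Fin 3)) 1)
  have hlim := ((tendsto_one_add_rpow_div_atTop hγ.2).const_mul ((∫ w, M w) * K)).add
    ((tendsto_one_add_rpow_mul_one_add_sqrt_rpow_neg_atTop hγ.1.le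
      (by linarith [hγ.2] : 2 * γ < α)).const_mul ((∫ w, M w) * σ))
  rw [mul_zero, mul_zero, add_zero] at hlim
  have hM0 : ∀ w, 0 ≤ M w := fun w => by positivity
  refine squeeze_zero' (Eventually.of_forall fun v => mul_nonneg (by positivity)
    (integral_nonneg fun w => mul_nonneg (hM0 w) (integral_nonneg fun ω => by positivity))) ?_
    (hlim.comp tendsto_comap)
  filter_upwards [tendsto_comap.eventually (eventually_ge_atTop 8)] with v hv
  calc (1 + ‖v‖) ^ γ * ∫ w, M w * ∫ ω in sphere 0 1, (1 + ‖v - ⟪v - w, ω⟫ • ω‖) ^ (-α) ∂μH[2]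
      ≤ (1 + ‖v‖) ^ γ * ∫ w, M w * (K / ‖v‖ + σ * (1 + √‖v‖) ^ (-α)) := by
        refine mul_le_mul_of_nonneg_left ?_ (by positivity)
        exact integral_mono_of_nonneg
          (ae_of_all _ fun w => mul_nonneg (hM0 w) (integral_nonneg fun ω => by positivity))
          (hM.mul_const _) (ae_of_all _ fun w => mul_le_mul_of_nonneg_left (hK v w hv) (hM0 w))
    _ = _ := by
        rw [integral_mul_const]
        simp only [Function.comp_apply]
        ring

/-- Decay of the gain term of the adjoint linear Boltzmann operator: for
`0 < γ < 1` and `α > 1 + γ`,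
`F(v) = (1+|v|)^γ ∫∫ M(v*) (1+|v'|)^{-α} dω dv* → 0` as `|v| → ∞`. -/
theorem stmt15 (γ α C : ℝ) (hγ : γ ∈ Set.Ioo (0 : ℝ) 1) (hα : 1 + γ < α) (hC : 0 < C) :
    Filter.Tendsto
      (fun v : EuclideanSpace ℝ (Fin 3) =>
        (1 + ‖v‖) ^ γ *
          ∫ w : EuclideanSpace ℝ (Fin 3),
            ((2 * Real.pi) ^ (-(3 : ℝ) / 2) * Real.exp (-‖w‖ ^ 2 / 2)) *
              ∫ ω in Metric.sphere (0 : EuclideanSpace ℝ (Fin 3)) 1,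
                (1 + ‖v - ⟪v - w, ω⟫ • ω‖) ^ (-α) ∂(μH[2]))
      (Filter.comap norm Filter.atTop) (nhds 0) :=
  stmt15_general γ α hγ hα
end
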